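/- arXiv:2007.09846 — 2 statements merged into one kernel-verified Lean document; each statement's English description precedes it below -/
import Mathlib

section
/- For any point p in a metric space X, the distance function dist_p(x) = dist(p,x) is an extremal function: it is admissible, and any admissible function s with s ≤ dist_p pointwise equals dist_p. -/
def Admissible {X : Type*} [MetricSpace X] (r : X → ℝ) : Prop :=
  ∀ x y : X, dist x y ≤ r x + r y

section

variable {X : Type*} [MetricSpace X]

theorem Admissible.nonneg {s : X → ℝ} (hs : Admissible s) (x : X) : 0 ≤ s x := by
  have := hs x x
  rw [dist_self] at this
  linarith

theorem admissible_dist (p : X) : Admissible (dist p) :=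
  fun x y => dist_triangle_left x y p

theorem Admissible.eq_dist_of_le {s : X → ℝ} {p : X} (hs : Admissible s)
    (hle : ∀ x, s x ≤ dist p x) : s = dist p := by
  have hp : s p = 0 := le_antisymm (by simpa using hle p) (hs.nonneg p)
  funext x
  refine le_antisymm (hle x) ?_
  simpa [hp] using hs p x

end

theorem distfun_extremal {X : Type*} [MetricSpace X] (p : X) :
    Admissible (fun x => dist p x) ∧
      ∀ s : X → ℝ, Admissible s → (∀ x, s x ≤ dist p x) →
        s = fun x => dist p x :=
  ⟨admissible_dist p, fun _ hs hle => hs.eq_dist_of_le hle⟩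
end

section
/- Suppose a metric space X has the property that for every subspace A ⊂ X, every metric space Y, and every 1-Lipschitz map f : A → Y, f extends to a 1-Lipschitz map F : X → Y. Then X is an ultrametric space: dist(x,z) ≤ max{dist(x,y), dist(y,z)} for all x, y, z ∈ X. -/
/-! Extend the map `a ↦ dist x a` on `{x, z}` to a short map `F : X → {0, dist x z}`. The point
`F y` must agree with `F x` or with `F z`, so `dist x z` is bounded by `dist x y` or by `dist y z`. -/

theorem LipschitzWith.dist_le_max_of_eq_or_eq {X Y : Type*} [PseudoMetricSpace X]
    [PseudoMetricSpace Y] {F : X → Y} (hF : LipschitzWith 1 F) {x y z : X}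
    (hy : F y = F x ∨ F y = F z) : dist (F x) (F z) ≤ max (dist x y) (dist y z) := by
  have hF' : ∀ a b, dist (F a) (F b) ≤ dist a b := by
    simpa only [NNReal.coe_one, one_mul] using hF.dist_le_mul
  rcases hy with hyx | hyz
  · calc dist (F x) (F z) = dist (F y) (F z) := by rw [hyx]
      _ ≤ dist y z := hF' y z
      _ ≤ _ := le_max_right _ _
  · calc dist (F x) (F z) = dist (F x) (F y) := by rw [hyz]
      _ ≤ dist x y := hF' x y
      _ ≤ _ := le_max_left _ _

theorem ultrametric_of_extension {X : Type*} [MetricSpace X]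
    (h : ∀ (A : Set X) (Y : Type) [MetricSpace Y] (f : A → Y),
      LipschitzWith 1 f → ∃ F : X → Y, LipschitzWith 1 F ∧ ∀ a : A, F ↑a = f a) :
    ∀ x y z : X, dist x z ≤ max (dist x y) (dist y z) := by
  intro x y z
  have hdist_mem : ∀ a : ({x, z} : Set X), dist x a ∈ ({0, dist x z} : Set ℝ) := by
    rintro ⟨a, rfl | rfl⟩ <;> simp
  have hf : LipschitzWith 1 fun a : ({x, z} : Set X) => dist x a := by
    simpa [Function.comp_def] using (LipschitzWith.dist_right x).comp (LipschitzWith.subtype_val _)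
  obtain ⟨F, hF, hFext⟩ :=
    h {x, z} ({0, dist x z} : Set ℝ) (fun a => ⟨dist x a, hdist_mem a⟩) (hf.subtype_mk hdist_mem)
  have hG : LipschitzWith 1 fun w => (F w : ℝ) := by
    simpa [Function.comp_def] using (LipschitzWith.subtype_val _).comp hF
  have hGx : (F x : ℝ) = 0 := by simpa using congrArg Subtype.val (hFext ⟨x, by simp⟩)
  have hGz : (F z : ℝ) = dist x z := congrArg Subtype.val (hFext ⟨z, by simp⟩)
  have hGy : (F y : ℝ) = F x ∨ (F y : ℝ) = F z := by
    rw [hGx, hGz]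
    exact (F y).2
  simpa [hGx, hGz, Real.dist_eq] using hG.dist_le_max_of_eq_or_eq hGy
end
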